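/- arXiv:2505.13984 — 7 statements merged into one kernel-verified Lean document; each statement's English description precedes it below -/
import Mathlib

section
/- Let A be a unital *-algebra with elements F_{abc} ∈ A for a, b, c ∈ {1,…,n} satisfying F_{abc} = −F_{acb}. Then there exist matrices R₁,…,Rₙ ∈ Matₙ(A) with (R_a)_{bc}* = (R_a)_{cb} (hermitian) such that (R_a)_{cb} − (R_b)_{ca} = F_{cab} for all a, b, c, if and only if F_{abc} + F_{bca} + F_{cab} + (F_{abc} + F_{bca} + F_{cab})* = 0 for all a, b, c ∈ {1,…,n}. -/
/-!
Necessity: substitute `F_{cab} = (R_a)_{cb} - (R_b)_{ca}` into the cyclic sum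
`S = F_{abc} + F_{bca} + F_{cab}`; by hermiticity the terms of `S + S*` cancel in pairs.

Sufficiency: take `6 (R_a)_{cb} = 3 F_{cab} - F_{abc} + F_{bca} + 2 (F_{abc}* - F_{bca}*)`. Using
only `F_{abc} = -F_{acb}`, it solves the equation, and the defect in its hermiticity is exactly
`S + S*`. Since `1/6` is a central self-adjoint scalar, dividing by `6` preserves both properties.
-/

section

variable {A ι : Type*} [Ring A] [StarRing A]

def cyclicSum (F : ι → ι → ι → A) (a b c : ι) : A :=
  F a b c + F b c a + F c a b

theorem cyclicSum_add_star_eq_zero {R : ι → Matrix ι ι A} (hR : ∀ a, (R a).IsHermitian)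
    {F : ι → ι → ι → A} (hRF : ∀ a b c, R a c b - R b c a = F c a b) (a b c : ι) :
    cyclicSum F a b c + star (cyclicSum F a b c) = 0 := by
  simp only [cyclicSum, ← hRF, star_add, star_sub, (hR _).apply]
  abel

section Construction

variable (F : ι → ι → ι → A)

def sixTimesSolution (a : ι) : Matrix ι ι A :=
  Matrix.of fun c b =>
    3 • F c a b - F a b c + F b c a + 2 • (star (F a b c) - star (F b c a))

variable {F}

theorem sixTimesSolution_isHermitian (hF : ∀ a b c, F a b c = -F a c b)
    (hS : ∀ a b c, cyclicSum F a b c + star (cyclicSum F a b c) = 0) (a : ι) :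
    (sixTimesSolution F a).IsHermitian := by
  refine Matrix.IsHermitian.ext fun c b => ?_
  simp only [sixTimesSolution, Matrix.of_apply, star_add, star_sub, star_nsmul, star_star]
  rw [hF b a c, hF a c b, hF c b a]
  linear_combination (norm := (simp only [cyclicSum, star_add, star_neg]; abel)) -hS a b c

theorem sixTimesSolution_sub (hF : ∀ a b c, F a b c = -F a c b) (a b c : ι) :
    sixTimesSolution F a c b - sixTimesSolution F b c a = 6 • F c a b := by
  simp only [sixTimesSolution, Matrix.of_apply]
  rw [hF c b a, hF b a c, hF a c b, star_neg, star_neg]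
  abel

end Construction

theorem exists_isHermitian_sub_eq [Invertible (6 : A)] {F : ι → ι → ι → A}
    (hF : ∀ a b c, F a b c = -F a c b)
    (hS : ∀ a b c, cyclicSum F a b c + star (cyclicSum F a b c) = 0) :
    ∃ R : ι → Matrix ι ι A, (∀ a, (R a).IsHermitian) ∧ ∀ a b c, R a c b - R b c a = F c a b := by
  refine ⟨fun a => ⅟(6 : A) • sixTimesSolution F a, fun a => ?_, fun a b c => ?_⟩
  · refine Matrix.IsHermitian.ext fun c b => ?_
    simp only [Matrix.smul_apply, smul_eq_mul]
    rw [star_mul, (sixTimesSolution_isHermitian hF hS a).apply,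
      (IsSelfAdjoint.ofNat 6).invOf.star_eq, ((Commute.ofNat_left 6 _).invOf_left).eq]
  · simp only [Matrix.smul_apply, smul_eq_mul]
    rw [← mul_sub, sixTimesSolution_sub hF, nsmul_eq_mul, Nat.cast_ofNat, invOf_mul_cancel_left]

theorem exists_isHermitian_sub_eq_iff [Invertible (6 : A)] {F : ι → ι → ι → A}
    (hF : ∀ a b c, F a b c = -F a c b) :
    (∃ R : ι → Matrix ι ι A, (∀ a, (R a).IsHermitian) ∧ ∀ a b c, R a c b - R b c a = F c a b) ↔
      ∀ a b c, cyclicSum F a b c + star (cyclicSum F a b c) = 0 :=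
  ⟨fun ⟨_, hR, hRF⟩ => cyclicSum_add_star_eq_zero hR hRF, exists_isHermitian_sub_eq hF⟩
end

/-- Proposition: solvability of `(R_a)_{cb} − (R_b)_{ca} = F_{cab}`:
given `F_{abc} ∈ A` with `F_{abc} = −F_{acb}`, there exist hermitian matrices
`R₁,…,Rₙ ∈ Matₙ(A)` (i.e. `(R_a)_{bc}* = (R_a)_{cb}`) with
`(R_a)_{cb} − (R_b)_{ca} = F_{cab}` for all `a,b,c` if and only if
`F_{abc} + F_{bca} + F_{cab} + (F_{abc} + F_{bca} + F_{cab})* = 0` for all `a,b,c`. -/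
theorem stmt5 {A : Type*} [Ring A] [StarRing A] [Algebra ℂ A] {n : ℕ}
    (F : Fin n → Fin n → Fin n → A)
    (hF : ∀ a b c, F a b c = -F a c b) :
    (∃ R : Fin n → Matrix (Fin n) (Fin n) A,
        (∀ a b c, star (R a b c) = R a c b) ∧
        (∀ a b c, R a c b - R b c a = F c a b)) ↔
    (∀ a b c, F a b c + F b c a + F c a b +
        star (F a b c + F b c a + F c a b) = 0) := by
  have h6 : IsUnit (6 : A) :=
    map_ofNat (algebraMap ℂ A) 6 ▸ (IsUnit.mk0 (6 : ℂ) (by norm_num)).map (algebraMap ℂ A)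
  let := h6.invertible
  refine (exists_congr fun R => and_congr_left' ?_).trans (exists_isHermitian_sub_eq_iff hF)
  exact forall_congr' fun a => (Matrix.IsHermitian.ext_iff.trans forall_comm).symm
end

section
/- Let A be a unital *-algebra and F_{abc} ∈ A (a,b,c ∈ {1,…,n}, n ≥ 3) with F_{abc} = −F_{acb} and F_{abc} + F_{bca} + F_{cab} + (F_{abc} + F_{bca} + F_{cab})* = 0. Then for pairwise distinct a, b, c, the assignment (R_a)_{bc} = ½(F_{abc} − F_{bca} + F_{cab}*), (R_b)_{ca} = ½(F_{abc}* − F_{bca}* − F_{cab}), (R_c)_{ab} = −½(F_{abc} + F_{bca} + F_{cab}*) satisfies the three equations (R_a)_{cb} − (R_b)_{ca} = F_{cab}, (R_b)_{ac} − (R_c)_{ab} = F_{abc}, (R_c)_{ba} − (R_a)_{bc} = F_{bca}, where (R_x)_{cb} is interpreted as (R_x)_{bc}*. -/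
/-! Write `x, y, z` for `F_{abc}, F_{bca}, F_{cab}`. The cyclic condition says that
`s = x + y + z` is skew-adjoint, so `x* = -s - y* - z*`. Substituting this for `x*`,
each of the three equations becomes a linear identity in `x, y, z, y*, z*`. No
compatibility of `*` with the scalars is needed: any additive map commutes with `½`. -/

theorem cyclic_half_smul_equations_of_star_sum_eq_neg {R M : Type*} [Field R] [CharZero R]
    [AddCommGroup M] [StarAddMonoid M] [Module R M] {x y z : M}
    (h : star (x + y + z) = -(x + y + z)) :
    (star ((2 : R)⁻¹ • (x - y + star z)) - (2 : R)⁻¹ • (star x - star y - z) = z) ∧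
    (star ((2 : R)⁻¹ • (star x - star y - z))
        - (-(2 : R)⁻¹ • (x + y + star z)) = x) ∧
    (star (-(2 : R)⁻¹ • (x + y + star z)) - (2 : R)⁻¹ • (x - y + star z) = y) := by
  have star_x : star x = -(x + y + z) - star y - star z := by
    rw [← h, star_add, star_add]
    abel
  have star_half (v : M) : star ((2 : R)⁻¹ • v) = (2 : R)⁻¹ • star v := by
    simpa using star_inv_natCast_smul (R := R) 2 v
  refine ⟨?_, ?_, ?_⟩ <;>
    simp only [neg_smul, star_neg, star_half, star_sub, star_add, star_star, star_x] <;>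
    module

theorem stmt6_general {A : Type*} [Ring A] [StarRing A] [Algebra ℂ A] {n : ℕ}
    (F : Fin n → Fin n → Fin n → A)
    (hF2 : ∀ a b c, F a b c + F b c a + F c a b +
        star (F a b c + F b c a + F c a b) = 0)
    (a b c : Fin n) :
    (star ((2 : ℂ)⁻¹ • (F a b c - F b c a + star (F c a b)))
        - (2 : ℂ)⁻¹ • (star (F a b c) - star (F b c a) - F c a b) = F c a b) ∧
    (star ((2 : ℂ)⁻¹ • (star (F a b c) - star (F b c a) - F c a b))
        - (-(2 : ℂ)⁻¹ • (F a b c + F b c a + star (F c a b))) = F a b c) ∧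
    (star (-(2 : ℂ)⁻¹ • (F a b c + F b c a + star (F c a b)))
        - (2 : ℂ)⁻¹ • (F a b c - F b c a + star (F c a b)) = F b c a) :=
  cyclic_half_smul_equations_of_star_sum_eq_neg (eq_neg_of_add_eq_zero_right (hF2 a b c))

/-- for `n ≥ 3` and `F` with `F_{abc} = −F_{acb}` and the cyclic
antihermiticity condition, for pairwise distinct `a, b, c` the explicit entries
`(R_a)_{bc} = ½(F_{abc} − F_{bca} + F_{cab}*)`,
`(R_b)_{ca} = ½(F_{abc}* − F_{bca}* − F_{cab})`,
`(R_c)_{ab} = −½(F_{abc} + F_{bca} + F_{cab}*)`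
satisfy the three equations
`(R_a)_{cb} − (R_b)_{ca} = F_{cab}`, `(R_b)_{ac} − (R_c)_{ab} = F_{abc}`,
`(R_c)_{ba} − (R_a)_{bc} = F_{bca}`, where `(R_x)_{cb}` is interpreted as
`(R_x)_{bc}*` (hermiticity convention). -/
theorem stmt6 {A : Type*} [Ring A] [StarRing A] [Algebra ℂ A] {n : ℕ}
    (hn : 3 ≤ n)
    (F : Fin n → Fin n → Fin n → A)
    (hF : ∀ a b c, F a b c = -F a c b)
    (hF2 : ∀ a b c, F a b c + F b c a + F c a b +
        star (F a b c + F b c a + F c a b) = 0)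
    (a b c : Fin n) (hab : a ≠ b) (hbc : b ≠ c) (hac : a ≠ c) :
    (star ((2 : ℂ)⁻¹ • (F a b c - F b c a + star (F c a b)))
        - (2 : ℂ)⁻¹ • (star (F a b c) - star (F b c a) - F c a b) = F c a b) ∧
    (star ((2 : ℂ)⁻¹ • (star (F a b c) - star (F b c a) - F c a b))
        - (-(2 : ℂ)⁻¹ • (F a b c + F b c a + star (F c a b))) = F a b c) ∧
    (star (-(2 : ℂ)⁻¹ • (F a b c + F b c a + star (F c a b)))
        - (2 : ℂ)⁻¹ • (F a b c - F b c a + star (F c a b)) = F b c a) :=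
  stmt6_general F hF2 a b c
end

section
/- Let M be a finitely generated projective left A-module with generators θ¹,…,θᴺ, dual basis φ₁,…,φ_N, and invertible left hermitian form h. With hⁱʲ = h(θⁱ, θʲ) and h_{ij} = h⁻¹(φ_i, φ_j), the map p_h : Aᴺ → Aᴺ defined on the standard basis by p_h(eⁱ) = Σ_{j,k} hⁱʲ h_{jk} eᵏ coincides with the projection p = s ∘ π, where π(eⁱ) = θⁱ and s(m) = Σᵢ φᵢ(m) eⁱ; in particular p_h² = p_h. -/
/-!
The entries `h_{jk} = h⁻¹(φ_j, φ_k)` are values `h(h⁻¹φ_j, h⁻¹φ_k)` of `h`, and `h(h⁻¹φ_j, m)` is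
`φ_j(m)*` by hermitian symmetry. Expanding `m = Σⱼ φⱼ(m) θʲ` then gives
`Σⱼ h(n, θʲ) h(h⁻¹φⱼ, m) = h(n, m)`; for `m = h⁻¹φ_k` this is `φ_k(n)`. Hence
`p_h(u)_k = Σᵢ uᵢ φ_k(θⁱ) = φ_k(π u)`, i.e. `p_h = s ∘ π`, which is idempotent since `π ∘ s = id`.
-/

open Finset

theorem apply_sum_smul_of_linear {A M ι : Type*} [Semiring A] [AddCommMonoid M] [Module A M]
    (f : M → A)
    (hadd : ∀ m n, f (m + n) = f m + f n) (hlin : ∀ (a : A) m, f (a • m) = a * f m)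
    (s : Finset ι) (u : ι → A) (v : ι → M) :
    f (∑ i ∈ s, u i • v i) = ∑ i ∈ s, u i * f (v i) := by
  let F : M →ₗ[A] A := { toFun := f, map_add' := hadd, map_smul' := hlin }
  exact (map_sum F _ s).trans (sum_congr rfl fun i _ => F.map_smul (u i) (v i))

section HermitianForm

variable {A M : Type*} [Ring A] [StarRing A] [AddCommGroup M] [Module A M]

theorem form_smul_right (h : M → M → A) (hlin : ∀ (a : A) (m n : M), h (a • m) n = a * h m n)
    (hsym : ∀ m n : M, star (h m n) = h n m) (a : A) (m n : M) :
    h n (a • m) = h n m * star a := by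
  rw [← hsym, hlin, star_mul, hsym]

theorem sum_form_mul_form_inv_dual {ι : Type*} [Fintype ι] (θ : ι → M) (φ : ι → (M → A))
    (hdb : ∀ m : M, ∑ i, φ i m • θ i = m) (h : M → M → A)
    (hadd : ∀ m n₁ n₂ : M, h m (n₁ + n₂) = h m n₁ + h m n₂)
    (hlin : ∀ (a : A) (m n : M), h (a • m) n = a * h m n)
    (hsym : ∀ m n : M, star (h m n) = h n m)
    (hinv : (M → A) → M) (hright : ∀ i, (fun n => h n (hinv (φ i))) = φ i) (n m : M) :
    ∑ j, h n (θ j) * h (hinv (φ j)) m = h n m := by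
  have hdual : ∀ j, h (hinv (φ j)) m = star (φ j m) := fun j => by
    rw [← congrFun (hright j) m, hsym]
  let hn : M →+ A := AddMonoidHom.mk' (h n) (hadd n)
  calc ∑ j, h n (θ j) * h (hinv (φ j)) m
      = ∑ j, hn (φ j m • θ j) := by
        simp only [hdual, hn, AddMonoidHom.mk'_apply, form_smul_right h hlin hsym]
    _ = h n m := by rw [← map_sum, hdb]; rfl

end HermitianForm

theorem stmt12_general {A M : Type*} [Ring A] [StarRing A]
    [AddCommGroup M] [Module A M] {N : ℕ}
    (θ : Fin N → M) (φ : Fin N → (M → A))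
    (hφadd : ∀ i (m n : M), φ i (m + n) = φ i m + φ i n)
    (hφlin : ∀ i (a : A) (m : M), φ i (a • m) = a * φ i m)
    (hdb₁ : ∀ m : M, ∑ i, φ i m • θ i = m)
    (h : M → M → A)
    (hadd₂ : ∀ m n₁ n₂ : M, h m (n₁ + n₂) = h m n₁ + h m n₂)
    (hlin : ∀ (a : A) (m n : M), h (a • m) n = a * h m n)
    (hsym : ∀ m n : M, star (h m n) = h n m)
    (hinv : (M → A) → M)
    (hright : ∀ i, (fun n => h n (hinv (φ i))) = φ i)
    -- `π : Aᴺ → M`, `s : M → Aᴺ`, `p = s ∘ π`, and `p_h` from the hermitian form: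
    (π : (Fin N → A) → M) (hπ : ∀ u, π u = ∑ i, u i • θ i)
    (s : M → (Fin N → A)) (hs : ∀ m, s m = fun i => φ i m)
    (ph : (Fin N → A) → (Fin N → A))
    (hph : ∀ u k, ph u k = ∑ i, u i * ∑ j, h (θ i) (θ j) * h (hinv (φ j)) (hinv (φ k))) :
    (∀ u, ph u = s (π u)) ∧ (∀ u, ph (ph u) = ph u) := by
  have hph_eq : ∀ u, ph u = s (π u) := fun u => funext fun k => by
    simp only [hph, sum_form_mul_form_inv_dual θ φ hdb₁ h hadd₂ hlin hsym hinv hright]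
    simp only [congrFun (hright k), hs, hπ, apply_sum_smul_of_linear (φ k) (hφadd k) (hφlin k)]
  have hπs : ∀ m, π (s m) = m := fun m => by rw [hπ, hs, hdb₁]
  exact ⟨hph_eq, fun u => by rw [hph_eq, hph_eq, hπs]⟩

/-- with generators `θⁱ`, dual basis `φᵢ` and invertible hermitian
form `h` on the f.g. projective module `M`, the map `p_h : Aᴺ → Aᴺ`,
`p_h(eⁱ) = Σⱼₖ hⁱʲ h_{jk} eᵏ` (extended `A`-linearly), coincides with the
projection `p = s ∘ π` where `π(eⁱ) = θⁱ` and `s(m) = Σᵢ φᵢ(m)eⁱ`; in particular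
`p_h² = p_h`. -/
theorem stmt12 {A M : Type*} [Ring A] [StarRing A] [Algebra ℂ A]
    [AddCommGroup M] [Module A M] {N : ℕ}
    (θ : Fin N → M) (φ : Fin N → (M → A))
    (hφadd : ∀ i (m n : M), φ i (m + n) = φ i m + φ i n)
    (hφlin : ∀ i (a : A) (m : M), φ i (a • m) = a * φ i m)
    (hdb₁ : ∀ m : M, ∑ i, φ i m • θ i = m)
    (hdb₂ : ∀ f : M → A, (∀ m n, f (m + n) = f m + f n) → (∀ (a : A) m, f (a • m) = a * f m) →
        ∀ m, ∑ i, φ i m * f (θ i) = f m)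
    (h : M → M → A)
    (hadd₁ : ∀ m₁ m₂ n : M, h (m₁ + m₂) n = h m₁ n + h m₂ n)
    (hadd₂ : ∀ m n₁ n₂ : M, h m (n₁ + n₂) = h m n₁ + h m n₂)
    (hlin : ∀ (a : A) (m n : M), h (a • m) n = a * h m n)
    (hsym : ∀ m n : M, star (h m n) = h n m)
    (hinv : (M → A) → M)
    (hleft : ∀ m : M, hinv (fun n => h n m) = m)
    (hright : ∀ i, (fun n => h n (hinv (φ i))) = φ i)
    -- `π : Aᴺ → M`, `s : M → Aᴺ`, `p = s ∘ π`, and `p_h` from the hermitian form: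
    (π : (Fin N → A) → M) (hπ : ∀ u, π u = ∑ i, u i • θ i)
    (s : M → (Fin N → A)) (hs : ∀ m, s m = fun i => φ i m)
    (ph : (Fin N → A) → (Fin N → A))
    (hph : ∀ u k, ph u k = ∑ i, u i * ∑ j, h (θ i) (θ j) * h (hinv (φ j)) (hinv (φ k))) :
    (∀ u, ph u = s (π u)) ∧ (∀ u, ph (ph u) = ph u) :=
  stmt12_general θ φ hφadd hφlin hdb₁ h hadd₂ hlin hsym hinv hright π hπ s hs ph hph
end

section
/- Let M be a finitely generated projective left A-module with generators θ¹,…,θᴺ, dual basis φ₁,…,φ_N, and invertible left hermitian form h. Then for every m ∈ M one has ĥ(m) = Σᵢ φⁱ · (φᵢ(m))*, where φⁱ = Σⱼ φⱼ hʲⁱ, and for every f ∈ M* one has ĥ⁻¹(f) = Σᵢ (f(θⁱ))* · θᵢ, where θᵢ = Σⱼ h_{ij} θʲ. -/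
/-!
Expanding the first argument of `h` in the dual basis gives `h x m = Σᵢ φᵢ(x) h(θⁱ, m)`, and the
hermitian symmetry turns this into an expansion of the second argument,
`h m x = Σᵢ h(m, θⁱ) (φᵢ x)*`; combining the two gives the first formula. For the second, the
defining property of `ĥ⁻¹` reads `φⱼ(m) = h(m, ĥ⁻¹φⱼ)`; expanding the right-hand side and
substituting into `m = Σⱼ φⱼ(m) θʲ` expresses every `m` through the frame `θᵢ = Σⱼ h_{ij} θʲ`.
-/

open Finset

section DualBasisExpansion

variable {A M ι : Type*} [Ring A] [AddCommGroup M] [Module A M] [Fintype ι]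
  {θ : ι → M} {φ : ι → M → A} {h : M → M → A}

theorem form_eq_sum_dualBasis_mul_left
    (hdb₂ : ∀ f : M → A, (∀ m n, f (m + n) = f m + f n) → (∀ (a : A) m, f (a • m) = a * f m) →
        ∀ m, ∑ i, φ i m * f (θ i) = f m)
    (hadd₁ : ∀ m₁ m₂ n : M, h (m₁ + m₂) n = h m₁ n + h m₂ n)
    (hlin : ∀ (a : A) (m n : M), h (a • m) n = a * h m n) (x m : M) :
    h x m = ∑ i, φ i x * h (θ i) m :=
  (hdb₂ (h · m) (fun a b => hadd₁ a b m) (fun a y => hlin a y m) x).symm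

theorem form_eq_sum_mul_star_dualBasis_right [StarRing A]
    (hdb₂ : ∀ f : M → A, (∀ m n, f (m + n) = f m + f n) → (∀ (a : A) m, f (a • m) = a * f m) →
        ∀ m, ∑ i, φ i m * f (θ i) = f m)
    (hadd₁ : ∀ m₁ m₂ n : M, h (m₁ + m₂) n = h m₁ n + h m₂ n)
    (hlin : ∀ (a : A) (m n : M), h (a • m) n = a * h m n)
    (hsym : ∀ m n : M, star (h m n) = h n m) (m x : M) :
    h m x = ∑ i, h m (θ i) * star (φ i x) := by
  rw [← hsym x m, form_eq_sum_dualBasis_mul_left hdb₂ hadd₁ hlin x m, star_sum]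
  simp only [star_mul, hsym]

theorem form_eq_sum_gram [StarRing A]
    (hdb₂ : ∀ f : M → A, (∀ m n, f (m + n) = f m + f n) → (∀ (a : A) m, f (a • m) = a * f m) →
        ∀ m, ∑ i, φ i m * f (θ i) = f m)
    (hadd₁ : ∀ m₁ m₂ n : M, h (m₁ + m₂) n = h m₁ n + h m₂ n)
    (hlin : ∀ (a : A) (m n : M), h (a • m) n = a * h m n)
    (hsym : ∀ m n : M, star (h m n) = h n m) (n m : M) :
    h n m = ∑ i, (∑ j, φ j n * h (θ j) (θ i)) * star (φ i m) := by
  rw [form_eq_sum_dualBasis_mul_left hdb₂ hadd₁ hlin n m]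
  simp only [form_eq_sum_mul_star_dualBasis_right hdb₂ hadd₁ hlin hsym (θ _) m, mul_sum,
    sum_mul, mul_assoc]
  exact sum_comm

theorem dualBasis_eq_sum_form_mul_inverseGram [StarRing A] {hinv : (M → A) → M}
    (hdb₂ : ∀ f : M → A, (∀ m n, f (m + n) = f m + f n) → (∀ (a : A) m, f (a • m) = a * f m) →
        ∀ m, ∑ i, φ i m * f (θ i) = f m)
    (hadd₁ : ∀ m₁ m₂ n : M, h (m₁ + m₂) n = h m₁ n + h m₂ n)
    (hlin : ∀ (a : A) (m n : M), h (a • m) n = a * h m n)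
    (hsym : ∀ m n : M, star (h m n) = h n m)
    (hright : ∀ i, (fun n => h n (hinv (φ i))) = φ i) (j : ι) (m : M) :
    φ j m = ∑ i, h m (θ i) * h (hinv (φ i)) (hinv (φ j)) := by
  rw [← congrFun (hright j) m, form_eq_sum_mul_star_dualBasis_right hdb₂ hadd₁ hlin hsym]
  simp only [← congrFun (hright _) (hinv (φ j)), hsym]

theorem eq_sum_form_smul_dualFrame [StarRing A] {hinv : (M → A) → M}
    (hdb₁ : ∀ m : M, ∑ i, φ i m • θ i = m)
    (hdb₂ : ∀ f : M → A, (∀ m n, f (m + n) = f m + f n) → (∀ (a : A) m, f (a • m) = a * f m) →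
        ∀ m, ∑ i, φ i m * f (θ i) = f m)
    (hadd₁ : ∀ m₁ m₂ n : M, h (m₁ + m₂) n = h m₁ n + h m₂ n)
    (hlin : ∀ (a : A) (m n : M), h (a • m) n = a * h m n)
    (hsym : ∀ m n : M, star (h m n) = h n m)
    (hright : ∀ i, (fun n => h n (hinv (φ i))) = φ i) (m : M) :
    m = ∑ i, h m (θ i) • ∑ j, h (hinv (φ i)) (hinv (φ j)) • θ j := by
  conv_lhs => rw [← hdb₁ m]
  simp only [dualBasis_eq_sum_form_mul_inverseGram hdb₂ hadd₁ hlin hsym hright _ m, sum_smul,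
    smul_sum, mul_smul]
  exact sum_comm

end DualBasisExpansion

theorem stmt13_general {A M : Type*} [Ring A] [StarRing A]
    [AddCommGroup M] [Module A M] {N : ℕ}
    (θ : Fin N → M) (φ : Fin N → (M → A))
    (hdb₁ : ∀ m : M, ∑ i, φ i m • θ i = m)
    (hdb₂ : ∀ f : M → A, (∀ m n, f (m + n) = f m + f n) → (∀ (a : A) m, f (a • m) = a * f m) →
        ∀ m, ∑ i, φ i m * f (θ i) = f m)
    (h : M → M → A)
    (hadd₁ : ∀ m₁ m₂ n : M, h (m₁ + m₂) n = h m₁ n + h m₂ n)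
    (hlin : ∀ (a : A) (m n : M), h (a • m) n = a * h m n)
    (hsym : ∀ m n : M, star (h m n) = h n m)
    (hinv : (M → A) → M)
    (hright : ∀ i, (fun n => h n (hinv (φ i))) = φ i) :
    (∀ m n : M, h n m = ∑ i, (∑ j, φ j n * h (θ j) (θ i)) * star (φ i m)) ∧
    (∀ f : M → A, (∀ m n, f (m + n) = f m + f n) → (∀ (a : A) m, f (a • m) = a * f m) →
        ((fun n => h n (hinv f)) = f) →
        hinv f = ∑ i, star (f (θ i)) •
          ∑ j, h (hinv (φ i)) (hinv (φ j)) • θ j) := by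
  refine ⟨fun m n => form_eq_sum_gram hdb₂ hadd₁ hlin hsym n m, fun f _ _ hf => ?_⟩
  simp only [← congrFun hf, hsym]
  exact eq_sum_form_smul_dualFrame hdb₁ hdb₂ hadd₁ hlin hsym hright (hinv f)

/-- for a f.g. projective module `M` with generators `θⁱ`, dual
basis `φᵢ`, and invertible left hermitian form `h`, one has
`ĥ(m) = Σᵢ φⁱ·(φᵢ(m))*` with `φⁱ = Σⱼ φⱼ hʲⁱ` (i.e. `h(n,m) = Σᵢ (Σⱼ φⱼ(n)hʲⁱ)(φᵢ m)*`),
and `ĥ⁻¹(f) = Σᵢ (f(θⁱ))*·θᵢ` with `θᵢ = Σⱼ h_{ij}θʲ`, for every `f ∈ M*`. -/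
theorem stmt13 {A M : Type*} [Ring A] [StarRing A] [Algebra ℂ A]
    [AddCommGroup M] [Module A M] {N : ℕ}
    (θ : Fin N → M) (φ : Fin N → (M → A))
    (hφadd : ∀ i (m n : M), φ i (m + n) = φ i m + φ i n)
    (hφlin : ∀ i (a : A) (m : M), φ i (a • m) = a * φ i m)
    (hdb₁ : ∀ m : M, ∑ i, φ i m • θ i = m)
    (hdb₂ : ∀ f : M → A, (∀ m n, f (m + n) = f m + f n) → (∀ (a : A) m, f (a • m) = a * f m) →
        ∀ m, ∑ i, φ i m * f (θ i) = f m)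
    (h : M → M → A)
    (hadd₁ : ∀ m₁ m₂ n : M, h (m₁ + m₂) n = h m₁ n + h m₂ n)
    (hadd₂ : ∀ m n₁ n₂ : M, h m (n₁ + n₂) = h m n₁ + h m n₂)
    (hlin : ∀ (a : A) (m n : M), h (a • m) n = a * h m n)
    (hsym : ∀ m n : M, star (h m n) = h n m)
    (hinv : (M → A) → M)
    (hleft : ∀ m : M, hinv (fun n => h n m) = m)
    (hright : ∀ i, (fun n => h n (hinv (φ i))) = φ i) :
    (∀ m n : M, h n m = ∑ i, (∑ j, φ j n * h (θ j) (θ i)) * star (φ i m)) ∧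
    (∀ f : M → A, (∀ m n, f (m + n) = f m + f n) → (∀ (a : A) m, f (a • m) = a * f m) →
        ((fun n => h n (hinv f)) = f) →
        hinv f = ∑ i, star (f (θ i)) •
          ∑ j, h (hinv (φ i)) (hinv (φ j)) • θ j) :=
  stmt13_general θ φ hdb₁ hdb₂ h hadd₁ hlin hsym hinv hright
end

section
/- Let (A, 𝔤, h) be a finitely generated projective hermitian calculus with generators θ¹,…,θᴺ of Ω¹_𝔤, and set θᵢ = Σⱼ h_{ij}θʲ. Then the symmetry form satisfies ρ = Σᵢ θᵢ* θⁱ, i.e., ρ(∂₁, ∂₂) = Σᵢ (θᵢ*(∂₁) θⁱ(∂₂) − θᵢ*(∂₂) θⁱ(∂₁)) for all ∂₁, ∂₂ ∈ 𝔤. -/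
/-!
Evaluating `ω` at `∂` is the pairing of `ω` with `φ(∂)`, so
`h⁻¹(φ(∂₁*), φ(∂₂)) = α(∂₂)` with `α = h⁻¹(φ(∂₁*))`. Expanding `α = Σᵢ φᵢ(α) θⁱ` in the generators,
it remains to identify the coefficients: by hermiticity
`φᵢ(α) = h(α, h⁻¹φᵢ) = h(h⁻¹φᵢ, α)*`, and expanding `h⁻¹φᵢ = Σⱼ h_{ij} θʲ` turns this into
`(Σⱼ h_{ij} θʲ(∂₁*))* = θᵢ*(∂₁)`. Antisymmetrising gives `ρ`.
-/

namespace HermitianCalculus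

variable {A G : Type*} [Ring A] {Ωa : Set (G → A)} {N : ℕ}
  {θ : Fin N → G → A} {φd : Fin N → (G → A) → A} {h : (G → A) → (G → A) → A}
  {hinv : ((G → A) → A) → G → A}

theorem map_sum_left (hadd₁ : ∀ ω₁ ω₂ η, h (ω₁ + ω₂) η = h ω₁ η + h ω₂ η)
    (ω : Fin N → G → A) (η : G → A) : h (∑ i, ω i) η = ∑ i, h (ω i) η :=
  map_sum (AddMonoidHom.mk' (h · η) (hadd₁ · · η)) ω Finset.univ

theorem apply_eq_sum_coeff_mul (hdb₁ : ∀ ω ∈ Ωa, ∑ i, φd i ω • θ i = ω)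
    {ω : G → A} (hω : ω ∈ Ωa) (δ : G) : ω δ = ∑ i, φd i ω * θ i δ := by
  conv_lhs => rw [← hdb₁ ω hω]
  simp only [Finset.sum_apply, Pi.smul_apply, smul_eq_mul]

theorem map_left_eq_sum_coeff_mul (hdb₁ : ∀ ω ∈ Ωa, ∑ i, φd i ω • θ i = ω)
    (hadd₁ : ∀ ω₁ ω₂ η, h (ω₁ + ω₂) η = h ω₁ η + h ω₂ η)
    (hlin : ∀ (a : A) ω η, h (a • ω) η = a * h ω η)
    {ω : G → A} (hω : ω ∈ Ωa) (η : G → A) : h ω η = ∑ j, φd j ω * h (θ j) η := by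
  conv_lhs => rw [← hdb₁ ω hω]
  rw [map_sum_left hadd₁]
  exact Finset.sum_congr rfl fun j _ => hlin _ _ _

theorem coeff_hinv_eval [StarRing A] (hθmem : ∀ i, θ i ∈ Ωa) (hdb₁ : ∀ ω ∈ Ωa, ∑ i, φd i ω • θ i = ω)
    (hadd₁ : ∀ ω₁ ω₂ η, h (ω₁ + ω₂) η = h ω₁ η + h ω₂ η)
    (hlin : ∀ (a : A) ω η, h (a • ω) η = a * h ω η)
    (hsym : ∀ ω η, star (h ω η) = h η ω) (hinvmem : ∀ f, hinv f ∈ Ωa)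
    (hrightφ : ∀ i, ∀ η ∈ Ωa, h η (hinv (φd i)) = φd i η)
    (hrightev : ∀ (δ : G), ∀ η ∈ Ωa, h η (hinv (fun ω => ω δ)) = η δ) (i : Fin N) (δ : G) :
    φd i (hinv fun ω => ω δ) = star (∑ j, h (hinv (φd i)) (hinv (φd j)) * θ j δ) := by
  rw [← hrightφ i _ (hinvmem _), ← hsym, map_left_eq_sum_coeff_mul hdb₁ hadd₁ hlin (hinvmem _)]
  congr 1
  refine Finset.sum_congr rfl fun j _ => ?_
  rw [hrightφ j _ (hinvmem _), hrightev δ _ (hθmem j)]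

theorem pairing_hinv_eval [StarRing A] (hθmem : ∀ i, θ i ∈ Ωa)
    (hdb₁ : ∀ ω ∈ Ωa, ∑ i, φd i ω • θ i = ω)
    (hadd₁ : ∀ ω₁ ω₂ η, h (ω₁ + ω₂) η = h ω₁ η + h ω₂ η)
    (hlin : ∀ (a : A) ω η, h (a • ω) η = a * h ω η)
    (hsym : ∀ ω η, star (h ω η) = h η ω) (hinvmem : ∀ f, hinv f ∈ Ωa)
    (hrightφ : ∀ i, ∀ η ∈ Ωa, h η (hinv (φd i)) = φd i η)
    (hrightev : ∀ (δ : G), ∀ η ∈ Ωa, h η (hinv (fun ω => ω δ)) = η δ) (δ δ' : G) :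
    h (hinv fun ω => ω δ) (hinv fun ω => ω δ') =
      ∑ i, star (∑ j, h (hinv (φd i)) (hinv (φd j)) * θ j δ) * θ i δ' := by
  rw [hrightev δ' _ (hinvmem _), apply_eq_sum_coeff_mul hdb₁ (hinvmem _)]
  simp only [coeff_hinv_eval hθmem hdb₁ hadd₁ hlin hsym hinvmem hrightφ hrightev]

end HermitianCalculus

open HermitianCalculus in
/-- The derivations `𝔤` are modelled by `G` with `*`-operation `starG`; 1-forms are
maps `G → A`, the module `Ω¹_𝔤` is the set `Ωa`, and `φ(∂)(ω) = ω(∂)`. -/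
theorem stmt14_general {A G : Type*} [Ring A] [StarRing A]
    (starG : G → G)
    (Ωa : Set (G → A)) {N : ℕ}
    (θ : Fin N → (G → A)) (hθmem : ∀ i, θ i ∈ Ωa)
    (φd : Fin N → ((G → A) → A))
    (hdb₁ : ∀ ω ∈ Ωa, ∑ i, φd i ω • θ i = ω)
    (h : (G → A) → (G → A) → A)
    (hadd₁ : ∀ ω₁ ω₂ η, h (ω₁ + ω₂) η = h ω₁ η + h ω₂ η)
    (hlin : ∀ (a : A) ω η, h (a • ω) η = a * h ω η)
    (hsym : ∀ ω η, star (h ω η) = h η ω)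
    (hinv : ((G → A) → A) → (G → A))
    (hinvmem : ∀ f, hinv f ∈ Ωa)
    (hrightφ : ∀ i, ∀ η ∈ Ωa, h η (hinv (φd i)) = φd i η)
    (hrightev : ∀ (δ : G), ∀ η ∈ Ωa, h η (hinv (fun ω => ω δ)) = η δ)
    (ρ : G → G → A)
    (hρ : ∀ δ₁ δ₂, ρ δ₁ δ₂ =
        h (hinv (fun ω => ω (starG δ₁))) (hinv (fun ω => ω δ₂)) -
        h (hinv (fun ω => ω (starG δ₂))) (hinv (fun ω => ω δ₁))) :
    ∀ δ₁ δ₂, ρ δ₁ δ₂ =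
      ∑ i, (star (∑ j, h (hinv (φd i)) (hinv (φd j)) * θ j (starG δ₁)) * θ i δ₂ -
            star (∑ j, h (hinv (φd i)) (hinv (φd j)) * θ j (starG δ₂)) * θ i δ₁) := by
  intro δ₁ δ₂
  have key := pairing_hinv_eval hθmem hdb₁ hadd₁ hlin hsym hinvmem hrightφ hrightev
  rw [hρ, key, key, ← Finset.sum_sub_distrib]

/-- for a finitely generated projective hermitian calculus with
generators `θⁱ` of `Ω¹_𝔤` and `θᵢ = Σⱼ h_{ij}θʲ`, the symmetry form satisfies
`ρ = Σᵢ θᵢ*θⁱ`, i.e.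
`ρ(∂₁,∂₂) = Σᵢ (θᵢ*(∂₁)θⁱ(∂₂) − θᵢ*(∂₂)θⁱ(∂₁))`, where `ω*(∂) = ω(∂*)*`.
The derivations `𝔤` are modelled by `G` with `*`-operation `starG`; 1-forms are
maps `G → A`, the module `Ω¹_𝔤` is the set `Ωa`, and `φ(∂)(ω) = ω(∂)`. -/
theorem stmt14 {A G : Type*} [Ring A] [StarRing A] [Algebra ℂ A]
    (starG : G → G) (hstarG : ∀ δ, starG (starG δ) = δ)
    (Ωa : Set (G → A)) {N : ℕ}
    (θ : Fin N → (G → A)) (hθmem : ∀ i, θ i ∈ Ωa)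
    (φd : Fin N → ((G → A) → A))
    (hφadd : ∀ i (ω η : G → A), φd i (ω + η) = φd i ω + φd i η)
    (hφlin : ∀ i (a : A) (ω : G → A), φd i (a • ω) = a * φd i ω)
    (hdb₁ : ∀ ω ∈ Ωa, ∑ i, φd i ω • θ i = ω)
    (h : (G → A) → (G → A) → A)
    (hadd₁ : ∀ ω₁ ω₂ η, h (ω₁ + ω₂) η = h ω₁ η + h ω₂ η)
    (hadd₂ : ∀ ω η₁ η₂, h ω (η₁ + η₂) = h ω η₁ + h ω η₂)
    (hlin : ∀ (a : A) ω η, h (a • ω) η = a * h ω η)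
    (hsym : ∀ ω η, star (h ω η) = h η ω)
    (hinv : ((G → A) → A) → (G → A))
    (hinvmem : ∀ f, hinv f ∈ Ωa)
    (hleft : ∀ ω ∈ Ωa, hinv (fun η => h η ω) = ω)
    (hrightφ : ∀ i, ∀ η ∈ Ωa, h η (hinv (φd i)) = φd i η)
    (hrightev : ∀ (δ : G), ∀ η ∈ Ωa, h η (hinv (fun ω => ω δ)) = η δ)
    (ρ : G → G → A)
    (hρ : ∀ δ₁ δ₂, ρ δ₁ δ₂ =
        h (hinv (fun ω => ω (starG δ₁))) (hinv (fun ω => ω δ₂)) -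
        h (hinv (fun ω => ω (starG δ₂))) (hinv (fun ω => ω δ₁))) :
    ∀ δ₁ δ₂, ρ δ₁ δ₂ =
      ∑ i, (star (∑ j, h (hinv (φd i)) (hinv (φd j)) * θ j (starG δ₁)) * θ i δ₂ -
            star (∑ j, h (hinv (φd i)) (hinv (φd j)) * θ j (starG δ₂)) * θ i δ₁) :=
  stmt14_general starG Ωa θ hθmem φd hdb₁ h hadd₁ hlin hsym hinv hinvmem hrightφ hrightev ρ hρ
end

section
/- Let A be a unital *-algebra, 𝔤 ⊆ Der(A) a *-closed abelian Lie algebra with hermitian basis ∂₁,…,∂ₙ, and suppose Ω¹_𝔤 is free with basis θ¹,…,θⁿ dual to the ∂ₐ (θⁱ(∂ₐ) = δⁱₐ·1). Let h be an invertible hermitian form with matrix (hⁱʲ) and inverse (h_{ij}). Then the weak symmetry condition dρ = 0 is equivalent to ∂ₐ(h_{bc} − h_{bc}*) + ∂_b(h_{ca} − h_{ca}*) + ∂_c(h_{ab} − h_{ab}*) = 0 for all a, b, c ∈ {1,…,n}. -/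
theorem sum_star_mul_ite_sub_star_mul_ite {A ι : Type*} [NonAssocRing A] [Star A] [Fintype ι]
    [DecidableEq ι] (g : ι → ι → A) (a b : ι) :
    ∑ i, (star (g i a) * (if i = b then 1 else 0) - star (g i b) * (if i = a then 1 else 0)) =
      star (g b a) - star (g a b) := by
  simp only [Finset.sum_sub_distrib, mul_ite, mul_one, mul_zero, Finset.sum_ite_eq',
    Finset.mem_univ, if_true]

theorem stmt15_general {A : Type*} [Ring A] [StarRing A] {n : ℕ}
    (D : Fin n → A → A)                                       -- the derivations ∂ₐ
    (hinvm : Fin n → Fin n → A)                             -- hⁱʲ and h_{ij}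
    (hinvherm : ∀ i j, star (hinvm i j) = hinvm j i)
    (ρ : Fin n → Fin n → A)
    (hρ : ∀ a b, ρ a b = ∑ i,
        (star (hinvm i a) * (if i = b then 1 else 0) -
         star (hinvm i b) * (if i = a then 1 else 0))) :
    (∀ a b c, D a (ρ b c) + D b (ρ c a) + D c (ρ a b) = 0) ↔
    (∀ a b c, D a (hinvm b c - star (hinvm b c)) +
        D b (hinvm c a - star (hinvm c a)) +
        D c (hinvm a b - star (hinvm a b)) = 0) := by
  have hρ_eq : ∀ a b, ρ a b = hinvm a b - star (hinvm a b) := fun a b => by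
    rw [hρ, sum_star_mul_ite_sub_star_mul_ite, hinvherm]
  simp only [hρ_eq]

/-- for an abelian `*`-closed Lie algebra `𝔤` with hermitian basis
`∂₁,…,∂ₙ` and `Ω¹_𝔤` free with dual basis `θⁱ` (`θⁱ(∂ₐ) = δⁱₐ·1`), with metric
matrix `(hⁱʲ)` and inverse `(h_{ij})`, the weak symmetry condition `dρ = 0` —
where `ρ(∂ₐ,∂_b) = Σᵢ(θᵢ*(∂ₐ)θⁱ(∂_b) − θᵢ*(∂_b)θⁱ(∂ₐ))` with `θᵢ(∂_b) = h_{ib}`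
and `dρ(∂ₐ,∂_b,∂_c) = ∂ₐρ(∂_b,∂_c) + ∂_bρ(∂_c,∂ₐ) + ∂_cρ(∂ₐ,∂_b)` — is
equivalent to `∂ₐ(h_{bc} − h_{bc}*) + ∂_b(h_{ca} − h_{ca}*) + ∂_c(h_{ab} − h_{ab}*) = 0`
for all `a, b, c`. -/
theorem stmt15 {A : Type*} [Ring A] [StarRing A] [Algebra ℂ A] {n : ℕ}
    (D : Fin n → A → A)                                       -- the derivations ∂ₐ
    (hDadd : ∀ a (x y : A), D a (x + y) = D a x + D a y)
    (hDleib : ∀ a (x y : A), D a (x * y) = D a x * y + x * D a y)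
    (hDstar : ∀ a (x : A), D a (star x) = star (D a x))        -- ∂ₐ hermitian
    (hDcomm : ∀ a b (x : A), D a (D b x) = D b (D a x))        -- 𝔤 abelian
    (hm hinvm : Fin n → Fin n → A)                             -- hⁱʲ and h_{ij}
    (hherm : ∀ i j, star (hm i j) = hm j i)
    (hinvherm : ∀ i j, star (hinvm i j) = hinvm j i)
    (hinv₁ : ∀ i k, ∑ j, hm i j * hinvm j k = if i = k then 1 else 0)
    (hinv₂ : ∀ i k, ∑ j, hinvm i j * hm j k = if i = k then 1 else 0)
    (ρ : Fin n → Fin n → A)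
    (hρ : ∀ a b, ρ a b = ∑ i,
        (star (hinvm i a) * (if i = b then 1 else 0) -
         star (hinvm i b) * (if i = a then 1 else 0))) :
    (∀ a b c, D a (ρ b c) + D b (ρ c a) + D c (ρ a b) = 0) ↔
    (∀ a b c, D a (hinvm b c - star (hinvm b c)) +
        D b (hinvm c a - star (hinvm c a)) +
        D c (hinvm a b - star (hinvm a b)) = 0) :=
  stmt15_general D hinvm hinvherm ρ hρ
end

section
/- In the setting of the previous statement (free rank-3 module with dual bases, abelian hermitian derivations, metric given by h¹¹ = 1, h²³ = h₀, h³² = h₀*, and ∂₁(h₀⁻¹) = ∂₁((h₀⁻¹)*)), the same connection ∇ is torsion free: (∇_{∂ₐ}θⁱ)(∂_b) = (∇_{∂_b}θⁱ)(∂ₐ) for all a, b, i ∈ {1,2,3}. -/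
theorem fin3_family_swap_symm {A : Type*} [Zero A] (p q r s t : A) :
    let Γ : Fin 3 → Matrix (Fin 3) (Fin 3) A :=
      ![!![0, 0, 0; 0, p, 0; 0, 0, q],
        !![0, 0, r; p, s, 0; 0, 0, 0],
        !![0, r, 0; 0, 0, 0; q, 0, t]]
    ∀ a b i, Γ a i b = Γ b i a := by
  intro Γ a b i
  fin_cases a <;> fin_cases b <;> fin_cases i <;> rfl

theorem stmt17_general {A : Type*} [Ring A] [StarRing A] [Algebra ℂ A]
    (D : Fin 3 → A → A)                                       -- the derivations ∂₁,∂₂,∂₃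
    (h0 h0inv : A)
    (hws : D 0 h0inv = D 0 (star h0inv))                       -- ∂₁(h₀⁻¹) = ∂₁((h₀⁻¹)*)
    (Γ : Fin 3 → Matrix (Fin 3) (Fin 3) A)
    (hΓ : Γ = ![
      !![0, 0, 0;
         0, -((2 : ℂ)⁻¹ • (h0 * D 0 h0inv)), 0;
         0, 0, -((2 : ℂ)⁻¹ • (star h0 * D 0 (star h0inv)))],
      !![0, 0, (2 : ℂ)⁻¹ • D 0 h0inv;
         -((2 : ℂ)⁻¹ • (h0 * D 0 (star h0inv))), -(h0 * D 1 h0inv), 0;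
         0, 0, 0],
      !![0, (2 : ℂ)⁻¹ • D 0 h0inv, 0;
         0, 0, 0;
         -((2 : ℂ)⁻¹ • (star h0 * D 0 h0inv)), 0, -(star h0 * D 2 h0inv)]]) :
    ∀ a b i, Γ a i b = Γ b i a := by
  subst hΓ
  rw [← hws]
  exact fin3_family_swap_symm _ _ _ _ _

/-- in the same setting as Statement 16 (free rank-3 module with
basis `θⁱ` dual to the commuting hermitian derivations `∂ₐ`, metric
`h¹¹ = 1, h²³ = h₀, h³² = h₀*`, weak symmetry `∂₁(h₀⁻¹) = ∂₁((h₀⁻¹)*)`), the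
connection `∇_{∂ₐ}θⁱ = Σⱼ Γₐⁱⱼ θʲ` is torsion free: since `θʲ(∂_b) = δʲ_b` and
`dθⁱ = 0`, this reads `(∇_{∂ₐ}θⁱ)(∂_b) = Γₐⁱ_b = Γ_bⁱₐ = (∇_{∂_b}θⁱ)(∂ₐ)`. -/
theorem stmt17 {A : Type*} [Ring A] [StarRing A] [Algebra ℂ A]
    (D : Fin 3 → A → A)                                       -- the derivations ∂₁,∂₂,∂₃
    (hDadd : ∀ a (x y : A), D a (x + y) = D a x + D a y)
    (hDleib : ∀ a (x y : A), D a (x * y) = D a x * y + x * D a y)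
    (hDsmul : ∀ a (c : ℂ) (x : A), D a (c • x) = c • D a x)
    (hDstar : ∀ a (x : A), D a (star x) = star (D a x))        -- ∂ₐ hermitian
    (hDcomm : ∀ a b (x : A), D a (D b x) = D b (D a x))        -- pairwise commuting
    (h0 h0inv : A)
    (hinv₁ : h0 * h0inv = 1) (hinv₂ : h0inv * h0 = 1)
    (hws : D 0 h0inv = D 0 (star h0inv))                       -- ∂₁(h₀⁻¹) = ∂₁((h₀⁻¹)*)
    (hm : Matrix (Fin 3) (Fin 3) A)
    (hhm : hm = !![1, 0, 0; 0, 0, h0; 0, star h0, 0])          -- the metric (hⁱʲ)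
    (Γ : Fin 3 → Matrix (Fin 3) (Fin 3) A)
    (hΓ : Γ = ![
      !![0, 0, 0;
         0, -((2 : ℂ)⁻¹ • (h0 * D 0 h0inv)), 0;
         0, 0, -((2 : ℂ)⁻¹ • (star h0 * D 0 (star h0inv)))],
      !![0, 0, (2 : ℂ)⁻¹ • D 0 h0inv;
         -((2 : ℂ)⁻¹ • (h0 * D 0 (star h0inv))), -(h0 * D 1 h0inv), 0;
         0, 0, 0],
      !![0, (2 : ℂ)⁻¹ • D 0 h0inv, 0;
         0, 0, 0;
         -((2 : ℂ)⁻¹ • (star h0 * D 0 h0inv)), 0, -(star h0 * D 2 h0inv)]]) :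
    ∀ a b i, Γ a i b = Γ b i a :=
  stmt17_general D h0 h0inv hws Γ hΓ
end
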